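/- Let μ be a probability measure on S^1 absolutely continuous with respect to the Lebesgue measure on S^1, and let 1 ≤ p < ∞ with h(x) = |x|^p. Then (ν₁,ν₂) ↦ LCOT_{μ,p}(ν₁,ν₂)^{1/p} defines a metric on the space of probability measures on S^1: it is nonnegative, symmetric, vanishes exactly when ν₁ = ν₂, and satisfies the triangle inequality LCOT_{μ,p}(ν₁,ν₂)^{1/p} ≤ LCOT_{μ,p}(ν₁,ν₃)^{1/p} + LCOT_{μ,p}(ν₃,ν₂)^{1/p}. -/

import Mathlib

open MeasureTheory Set

noncomputable section

/-- Geodesic distance on the circle `ℝ/ℤ`, for representatives `x, y ∈ ℝ`: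
`|x - y|_{S¹} = min_{k ∈ ℤ} |x - y + k|`. -/
def circleDist (x y : ℝ) : ℝ := ⨅ k : ℤ, |x - y + (k : ℝ)|

/-- The CDF of a circular probability measure (represented as a probability measure on `ℝ`
supported on `[0,1)`), extended to all of `ℝ` by `F(y + n) = F(y) + n`. -/
def cdf (μ : Measure ℝ) (y : ℝ) : ℝ := (μ (Ico 0 (Int.fract y))).toReal + (⌊y⌋ : ℝ)

/-- The quantile function `F_μ⁻¹(y) := inf {x | F_μ(x) > y}`. -/
def quantile (μ : Measure ℝ) (y : ℝ) : ℝ := sInf {x : ℝ | cdf μ x > y}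

/-- The CDF with respect to a reference (cutting) point `x₀`:
`F_{μ,x₀}(y) := F_μ(x₀ + y) - F_μ(x₀)`. -/
def cdfCut (μ : Measure ℝ) (x₀ y : ℝ) : ℝ := cdf μ (x₀ + y) - cdf μ x₀

/-- The quantile of the cut CDF: `F_{μ,x₀}⁻¹(y) := inf {x | F_{μ,x₀}(x) > y}`. -/
def quantileCut (μ : Measure ℝ) (x₀ y : ℝ) : ℝ := sInf {x : ℝ | cdfCut μ x₀ x > y}

/-- The circular optimal transport cost `COT_h(μ,ν)` with ground cost `h (|x - y|_{S¹})`,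
the infimum over all couplings of `μ` and `ν`. -/
def COT (h : ℝ → ℝ) (μ ν : Measure ℝ) : ℝ :=
  sInf {c : ℝ | ∃ γ : Measure (ℝ × ℝ), IsProbabilityMeasure γ ∧
    γ.map Prod.fst = μ ∧ γ.map Prod.snd = ν ∧
    c = ∫ p, h (circleDist p.1 p.2) ∂γ}

/-- The transport cost associated with cutting the circle at `x₀`:
`∫₀¹ h(|F_{μ,x₀}⁻¹(x) - F_{ν,x₀}⁻¹(x)|) dx`. -/
def cutCost (h : ℝ → ℝ) (μ ν : Measure ℝ) (x₀ : ℝ) : ℝ :=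
  ∫ x in (0:ℝ)..1, h |quantileCut μ x₀ x - quantileCut ν x₀ x|

/-- The transport cost associated with a shift `α`:
`∫₀¹ h(|F_μ⁻¹(x) - F_ν⁻¹(x - α)|) dx`. -/
def shiftCost (h : ℝ → ℝ) (μ ν : Measure ℝ) (α : ℝ) : ℝ :=
  ∫ x in (0:ℝ)..1, h |quantile μ x - quantile ν (x - α)|

/-- The circular Monge map determined by a cutting point `x_cut`:
`M_μ^ν(x) := F_{ν,x_cut}⁻¹(F_{μ,x_cut}(x - x_cut)) + x_cut`. -/
def mongeMap (μ ν : Measure ℝ) (xcut : ℝ) (x : ℝ) : ℝ :=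
  quantileCut ν xcut (cdfCut μ xcut (x - xcut)) + xcut

/-- The LCOT embedding of `ν` with respect to the reference `μ` and shift `α`:
`ν̂(x) := F_ν⁻¹(F_μ(x) - α) - x`. -/
def lcotEmbed (μ ν : Measure ℝ) (α : ℝ) (x : ℝ) : ℝ :=
  quantile ν (cdf μ x - α) - x

/-!
Identifying `S¹` with `UnitAddCircle`, `circleDist x y = ‖↑x - ↑y‖`, so `LCOT_{μ,p}^{1/p}` is the
`L^p(μ)` distance between the circle-valued maps `t ↦ ν̂(t) mod 1`; nonnegativity, symmetry and
the triangle inequality are those of the `L^p` seminorm (Minkowski).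

For definiteness, `ν̂(t) + t ≡ F_ν⁻¹(fract (F_μ(t) - α)) (mod 1)`, and the map
`t ↦ F_ν⁻¹(fract (F_μ(t) - α))` pushes `μ` forward to `ν`: since `μ` has no atoms, `F_μ` pushes `μ`
to the uniform measure on `[0,1)` (as `F_μ ∘ F_μ⁻¹ = id` there), the rotation `s ↦ fract (s - α)`
preserves the uniform measure, and `F_ν⁻¹` pushes it to `ν` (as `F_ν⁻¹ s < y ↔ s < ν (Iio y)`).
Hence embeddings that agree `μ`-a.e. modulo `1` come from the same measure.
-/

lemma circleDist_eq_norm_sub (x y : ℝ) : circleDist x y = ‖(x : UnitAddCircle) - y‖ := by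
  rw [← AddCircle.coe_sub, UnitAddCircle.norm_eq]
  refine le_antisymm ?_ (le_ciInf fun k => ?_)
  · refine (ciInf_le ⟨0, ?_⟩ (-round (x - y))).trans_eq ?_
    · rintro _ ⟨k, rfl⟩
      positivity
    · push_cast
      ring_nf
  · simpa [sub_eq_add_neg] using round_le (x - y) (-k)

lemma UnitAddCircle.coe_eq_coe_iff_fract_eq {x y : ℝ} :
    (x : UnitAddCircle) = y ↔ Int.fract x = Int.fract y := by
  rw [← sub_eq_zero, ← AddCircle.coe_sub, AddCircle.coe_eq_zero_iff, Int.fract_eq_fract]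
  simp [eq_comm]

lemma UnitAddCircle.memLp {α : Type*} [MeasurableSpace α] {μ : Measure α} [IsFiniteMeasure μ]
    {p : ENNReal} {f : α → UnitAddCircle} (hf : AEStronglyMeasurable f μ) : MemLp f p μ :=
  .of_bound hf (1 / 2) <| ae_of_all _ fun _ => by
    simpa using AddCircle.norm_le_half_period 1 one_ne_zero

lemma integral_circleDist_rpow_eq_eLpNorm {α : Type*} [MeasurableSpace α] {μ : Measure α}
    [IsFiniteMeasure μ] {p : ℝ} (hp : 0 < p) {f g : α → ℝ} (hf : Measurable f)
    (hg : Measurable g) :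
    (∫ t, circleDist (f t) (g t) ^ p ∂μ) ^ (1 / p) =
      (eLpNorm (fun t => (f t : UnitAddCircle) - g t) (ENNReal.ofReal p) μ).toReal := by
  have hm : AEStronglyMeasurable (fun t => (f t : UnitAddCircle) - g t) μ :=
    ((AddCircle.measurable_mk'.comp hf).sub (AddCircle.measurable_mk'.comp hg)).aestronglyMeasurable
  rw [(UnitAddCircle.memLp hm).eLpNorm_eq_integral_rpow_norm (by simpa using hp)
    ENNReal.ofReal_ne_top, ENNReal.toReal_ofReal (by positivity), ENNReal.toReal_ofReal hp.le,
    one_div]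
  simp_rw [circleDist_eq_norm_sub]

lemma exists_lt_of_lt_measure_Iio (μ : Measure ℝ) {r : ENNReal} {y : ℝ} (h : r < μ (Iio y)) :
    ∃ x < y, r < μ (Iio x) := by
  obtain ⟨u, hu, hu_lt, hu_lim⟩ := exists_seq_strictMono_tendsto y
  rw [← (isLUB_of_tendsto_atTop hu.monotone hu_lim).iUnion_Iio_eq,
    Monotone.measure_iUnion fun m n hmn => Iio_subset_Iio (hu.monotone hmn), lt_iSup_iff] at h
  obtain ⟨n, hn⟩ := h
  exact ⟨u n, hu_lt n, hn⟩

section CDF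

variable {ν : Measure ℝ}

lemma cdf_add_intCast (x : ℝ) (k : ℤ) : cdf ν (x + k) = cdf ν x + k := by
  rw [cdf, cdf, Int.fract_add_intCast, Int.floor_add_intCast]
  push_cast
  ring

lemma floor_le_cdf (x : ℝ) : (⌊x⌋ : ℝ) ≤ cdf ν x :=
  le_add_of_nonneg_left ENNReal.toReal_nonneg

variable [IsProbabilityMeasure ν]

lemma cdf_le_floor_add_one (x : ℝ) : cdf ν x ≤ ⌊x⌋ + 1 := by
  rw [cdf, add_comm]
  gcongr
  exact measureReal_le_one

lemma monotone_cdf : Monotone (cdf ν) := by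
  intro x y hxy
  rcases (Int.floor_le_floor hxy).eq_or_lt with hfloor | hfloor
  · have hfract : Int.fract x ≤ Int.fract y := by
      rw [Int.fract, Int.fract, hfloor]
      linarith
    rw [cdf, cdf, hfloor]
    gcongr
    exact measure_ne_top _ _
  · have : (⌊x⌋ : ℝ) + 1 ≤ ⌊y⌋ := by exact_mod_cast hfloor
    linarith [cdf_le_floor_add_one (ν := ν) x, floor_le_cdf (ν := ν) y]

lemma measure_Iio_eq_zero_of_nonpos (hν : ν (Ico 0 1) = 1) {x : ℝ} (hx : x ≤ 0) : ν (Iio x) = 0 :=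
  measure_mono_null (fun _ ht hmem => (hmem.1.trans_lt ht).not_ge hx : Iio x ⊆ (Ico 0 1)ᶜ)
    ((prob_compl_eq_zero_iff measurableSet_Ico).2 hν)

lemma measureReal_Iio_eq_one_of_one_le (hν : ν (Ico 0 1) = 1) {x : ℝ} (hx : 1 ≤ x) :
    ν.real (Iio x) = 1 :=
  le_antisymm measureReal_le_one <| by
    rw [← ENNReal.toReal_one, ← hν]
    exact measureReal_mono fun t ht => ht.2.trans_le hx

lemma cdf_eq_measureReal_Iio (hν : ν (Ico 0 1) = 1) {x : ℝ} (hx0 : 0 ≤ x) (hx1 : x ≤ 1) :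
    cdf ν x = ν.real (Iio x) := by
  rcases hx1.lt_or_eq with hx1 | rfl
  · rw [cdf, Int.fract_eq_self.2 ⟨hx0, hx1⟩, Int.floor_eq_zero_iff.2 ⟨hx0, hx1⟩,
      Int.cast_zero, add_zero, measureReal_def,
      ← measure_inter_conull (s := Iio x) ((prob_compl_eq_zero_iff measurableSet_Ico).2 hν),
      inter_comm, Ico_inter_Iio, min_eq_right hx1.le]
  · rw [measureReal_Iio_eq_one_of_one_le hν le_rfl, cdf]
    simp

lemma lt_cdf_iff (hν : ν (Ico 0 1) = 1) {s : ℝ} (hs : s ∈ Ico (0 : ℝ) 1) (x : ℝ) :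
    s < cdf ν x ↔ s < ν.real (Iio x) := by
  rcases lt_or_ge x 0 with hx0 | hx0
  · have hcdf : cdf ν x ≤ 0 := (monotone_cdf hx0.le).trans_eq (by simp [cdf])
    rw [measureReal_def, measure_Iio_eq_zero_of_nonpos hν hx0.le, ENNReal.toReal_zero]
    exact iff_of_false (by linarith [hs.1]) (by linarith [hs.1])
  rcases le_or_gt x 1 with hx1 | hx1
  · rw [cdf_eq_measureReal_Iio hν hx0 hx1]
  · have hcdf : 1 ≤ cdf ν x := (by simp [cdf] : (1 : ℝ) ≤ cdf ν 1).trans (monotone_cdf hx1.le)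
    rw [measureReal_Iio_eq_one_of_one_le hν hx1.le]
    exact iff_of_true (by linarith [hs.2]) hs.2

end CDF

section Quantile

variable {ν : Measure ℝ}

lemma nonempty_setOf_lt_cdf (s : ℝ) : {x | cdf ν x > s}.Nonempty :=
  ⟨⌊s⌋ + 1, by
    have := floor_le_cdf (ν := ν) (⌊s⌋ + 1)
    rw [← Int.cast_one, ← Int.cast_add, Int.floor_intCast] at this
    push_cast at this
    exact (Int.lt_floor_add_one s).trans_le this⟩

variable [IsProbabilityMeasure ν]

lemma bddBelow_setOf_lt_cdf (s : ℝ) : BddBelow {x | cdf ν x > s} :=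
  ⟨s - 1, fun x (hx : s < cdf ν x) => by
    linarith [cdf_le_floor_add_one (ν := ν) x, Int.floor_le x]⟩

lemma monotone_quantile : Monotone (quantile ν) := fun _ t hst =>
  csInf_le_csInf (bddBelow_setOf_lt_cdf _) (nonempty_setOf_lt_cdf t) fun _ hx => hst.trans_lt hx

lemma quantile_add_intCast (s : ℝ) (k : ℤ) : quantile ν (s + k) = quantile ν s + k := by
  have hset : (· + (k : ℝ)) '' {x | cdf ν x > s} = {x | cdf ν x > s + k} := by
    ext x
    constructor
    · rintro ⟨y, hy, rfl⟩
      exact (add_lt_add_iff_right _).2 hy |>.trans_eq (cdf_add_intCast y k).symm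
    · intro hx
      refine ⟨x - k, ?_, sub_add_cancel x k⟩
      have := cdf_add_intCast (ν := ν) (x - k) k
      rw [sub_add_cancel] at this
      exact (lt_sub_iff_add_lt.2 hx).trans_eq (eq_sub_of_add_eq this.symm).symm
  rw [quantile, quantile, ← hset, Monotone.map_csInf_of_continuousAt
    (continuous_add_const _).continuousAt (fun _ _ h => by simpa using h)
    (nonempty_setOf_lt_cdf s) (bddBelow_setOf_lt_cdf s)]

lemma quantile_lt_iff (hν : ν (Ico 0 1) = 1) {s : ℝ} (hs : s ∈ Ico (0 : ℝ) 1) (y : ℝ) :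
    quantile ν s < y ↔ s < ν.real (Iio y) := by
  rw [quantile, csInf_lt_iff (bddBelow_setOf_lt_cdf s) (nonempty_setOf_lt_cdf s)]
  constructor
  · rintro ⟨x, hx, hxy⟩
    exact ((lt_cdf_iff hν hs x).1 hx).trans_le (measureReal_mono (Iio_subset_Iio hxy.le))
  · intro h
    obtain ⟨x, hxy, hx⟩ := exists_lt_of_lt_measure_Iio ν
      ((ENNReal.ofReal_lt_iff_lt_toReal hs.1 (measure_ne_top _ _)).2 h)
    exact ⟨x, (lt_cdf_iff hν hs x).2
      ((ENNReal.ofReal_lt_iff_lt_toReal hs.1 (measure_ne_top _ _)).1 hx), hxy⟩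

lemma quantile_mem_Ico (hν : ν (Ico 0 1) = 1) {s : ℝ} (hs : s ∈ Ico (0 : ℝ) 1) :
    quantile ν s ∈ Ico (0 : ℝ) 1 := by
  refine ⟨not_lt.1 fun h => ?_, (quantile_lt_iff hν hs 1).2 ?_⟩
  · have := (quantile_lt_iff hν hs 0).1 h
    rw [measureReal_def, measure_Iio_eq_zero_of_nonpos hν le_rfl, ENNReal.toReal_zero] at this
    exact this.not_ge hs.1
  · rw [measureReal_Iio_eq_one_of_one_le hν le_rfl]
    exact hs.2

lemma fract_quantile (hν : ν (Ico 0 1) = 1) (s : ℝ) :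
    Int.fract (quantile ν s) = quantile ν (Int.fract s) := by
  rw [← Int.fract_add_floor s, quantile_add_intCast, Int.fract_add_intCast, Int.fract_add_floor,
    Int.fract_eq_self.2 (quantile_mem_Ico hν ⟨Int.fract_nonneg s, Int.fract_lt_one s⟩)]

end Quantile

lemma Function.Periodic.map_restrict_Ico_comp_sub {β : Type*} [MeasurableSpace β] {g : ℝ → β}
    (hg : Function.Periodic g 1) (hgm : Measurable g) (α : ℝ) :
    (volume.restrict (Ico (0 : ℝ) 1)).map (fun s => g (s - α)) =
      (volume.restrict (Ico (0 : ℝ) 1)).map g := by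
  have hlift : Measurable hg.lift := measurable_from_quotient.2 hgm
  have hmk := UnitAddCircle.measurePreserving_mk 0
  rw [zero_add] at hmk
  rw [Measure.restrict_congr_set Ico_ae_eq_Ioc]
  -- Both sides factor through `ℝ → ℝ/ℤ`, which carries `volume` on `(0,1]` to the Haar measure,
  -- and the Haar measure is invariant under rotation.
  calc (volume.restrict (Ioc (0 : ℝ) 1)).map (fun s => g (s - α))
      = ((volume.restrict (Ioc (0 : ℝ) 1)).map ((↑) : ℝ → UnitAddCircle)).map
          (hg.lift ∘ fun z => z - (α : UnitAddCircle)) := by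
        rw [Measure.map_map (hlift.comp (measurable_sub_const _)) AddCircle.measurable_mk']
        congr 1
    _ = ((volume.restrict (Ioc (0 : ℝ) 1)).map ((↑) : ℝ → UnitAddCircle)).map hg.lift := by
        rw [hmk.map_eq, ← Measure.map_map hlift (measurable_sub_const _), map_sub_right_eq_self]
    _ = (volume.restrict (Ioc (0 : ℝ) 1)).map g := by
        rw [Measure.map_map hlift AddCircle.measurable_mk']
        rfl

section Transform

variable {ν : Measure ℝ} [IsProbabilityMeasure ν]

lemma map_quantile_volume_restrict (hν : ν (Ico 0 1) = 1) :
    (volume.restrict (Ico (0 : ℝ) 1)).map (quantile ν) = ν := by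
  have hQ : Measurable (quantile ν) := monotone_quantile.measurable
  refine ext_of_generate_finite _ (borel_eq_generateFrom_Iio ℝ) isPiSystem_Iio ?_ ?_
  · rintro _ ⟨y, rfl⟩
    have hpre : quantile ν ⁻¹' Iio y ∩ Ico 0 1 = Ico 0 1 ∩ Iio (ν.real (Iio y)) := by
      ext s
      simp only [mem_inter_iff, mem_preimage, mem_Iio]
      exact ⟨fun h => ⟨h.2, (quantile_lt_iff hν h.2 y).1 h.1⟩,
        fun h => ⟨(quantile_lt_iff hν h.1 y).2 h.2, h.1⟩⟩
    rw [Measure.map_apply hQ measurableSet_Iio, Measure.restrict_apply' measurableSet_Ico, hpre,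
      Ico_inter_Iio, min_eq_right measureReal_le_one, Real.volume_Ico, sub_zero,
      ofReal_measureReal]
  · rw [Measure.map_apply hQ MeasurableSet.univ, preimage_univ, Measure.restrict_apply_univ,
      Real.volume_Ico, measure_univ]
    norm_num

lemma cdf_quantile (hν : ν (Ico 0 1) = 1) (hatom : ∀ a, ν {a} = 0) {s : ℝ}
    (hs : s ∈ Ico (0 : ℝ) 1) : cdf ν (quantile ν s) = s := by
  have ha := quantile_mem_Ico hν hs
  rw [cdf_eq_measureReal_Iio hν ha.1 ha.2.le]
  refine le_antisymm (not_lt.1 fun h => (quantile_lt_iff hν hs _).2 h |>.false) ?_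
  -- No atoms: `ν (Iio a) = ν (Iic a)`, which is right-continuous in `a`.
  rw [measureReal_congr (Iio_ae_eq_Iic' (hatom _)), ← ProbabilityTheory.cdf_eq_real,
    ← StieltjesFunction.iInf_Ioi_eq]
  refine le_ciInf fun r => ?_
  rw [ProbabilityTheory.cdf_eq_real]
  exact ((quantile_lt_iff hν hs r).1 r.2).le.trans (measureReal_mono Iio_subset_Iic_self)

lemma map_cdf_eq_volume_restrict (hν : ν (Ico 0 1) = 1) (hac : ν ≪ volume) :
    ν.map (cdf ν) = volume.restrict (Ico (0 : ℝ) 1) := by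
  have h := map_quantile_volume_restrict hν
  calc ν.map (cdf ν) = ((volume.restrict (Ico (0 : ℝ) 1)).map (quantile ν)).map (cdf ν) := by
        rw [h]
    _ = (volume.restrict (Ico (0 : ℝ) 1)).map (cdf ν ∘ quantile ν) :=
        Measure.map_map monotone_cdf.measurable monotone_quantile.measurable
    _ = (volume.restrict (Ico (0 : ℝ) 1)).map id :=
        Measure.map_congr <| ae_restrict_of_forall_mem measurableSet_Ico fun s hs =>
          cdf_quantile hν (fun _ => hac Real.volume_singleton) hs
    _ = volume.restrict (Ico (0 : ℝ) 1) := Measure.map_id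

end Transform

section Embedding

variable {μ : Measure ℝ} [IsProbabilityMeasure μ]

lemma measurable_lcotEmbed (ν : Measure ℝ) [IsProbabilityMeasure ν] (α : ℝ) :
    Measurable (lcotEmbed μ ν α) :=
  (monotone_quantile.measurable.comp (monotone_cdf.measurable.sub_const α)).sub measurable_id

lemma map_quantile_fract_cdf_sub {ν : Measure ℝ} [IsProbabilityMeasure ν]
    (hμ : μ (Ico 0 1) = 1) (hac : μ ≪ volume) (hν : ν (Ico 0 1) = 1) (α : ℝ) :
    μ.map (fun t => quantile ν (Int.fract (cdf μ t - α))) = ν := by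
  have hQ : Measurable (quantile ν ∘ Int.fract) :=
    monotone_quantile.measurable.comp measurable_fract
  calc μ.map (fun t => quantile ν (Int.fract (cdf μ t - α)))
      = (μ.map (cdf μ)).map (fun s => (quantile ν ∘ Int.fract) (s - α)) :=
        (Measure.map_map (hQ.comp (measurable_sub_const α)) monotone_cdf.measurable).symm
    _ = (volume.restrict (Ico (0 : ℝ) 1)).map (quantile ν ∘ Int.fract) := by
        rw [map_cdf_eq_volume_restrict hμ hac,
          ((Int.fract_periodic ℝ).comp (quantile ν)).map_restrict_Ico_comp_sub hQ]
    _ = (volume.restrict (Ico (0 : ℝ) 1)).map (quantile ν) :=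
        Measure.map_congr <| ae_restrict_of_forall_mem measurableSet_Ico fun s hs => by
          simp [Int.fract_eq_self.2 hs]
    _ = ν := map_quantile_volume_restrict hν

lemma eq_of_ae_coe_lcotEmbed_eq {ν₁ ν₂ : Measure ℝ} [IsProbabilityMeasure ν₁]
    [IsProbabilityMeasure ν₂] (hμ : μ (Ico 0 1) = 1) (hac : μ ≪ volume)
    (hν₁ : ν₁ (Ico 0 1) = 1) (hν₂ : ν₂ (Ico 0 1) = 1) {α₁ α₂ : ℝ}
    (h : ∀ᵐ t ∂μ, (lcotEmbed μ ν₁ α₁ t : UnitAddCircle) = lcotEmbed μ ν₂ α₂ t) : ν₁ = ν₂ := by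
  rw [← map_quantile_fract_cdf_sub hμ hac hν₁ α₁, ← map_quantile_fract_cdf_sub hμ hac hν₂ α₂]
  refine Measure.map_congr (h.mono fun t ht => ?_)
  rwa [lcotEmbed, lcotEmbed, AddCircle.coe_sub, AddCircle.coe_sub, sub_left_inj,
    UnitAddCircle.coe_eq_coe_iff_fract_eq, fract_quantile hν₁, fract_quantile hν₂] at ht

end Embedding

theorem lcot_is_metric_general
    (p : ℝ) (hp : 1 ≤ p)
    (μ : Measure ℝ) [IsProbabilityMeasure μ]
    (hμ : μ (Ico 0 1) = 1) (hac : μ ≪ volume)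
    (A : Measure ℝ → ℝ) :
    letI d : Measure ℝ → Measure ℝ → ℝ := fun ν₁ ν₂ =>
      (∫ t, circleDist (lcotEmbed μ ν₁ (A ν₁) t) (lcotEmbed μ ν₂ (A ν₂) t) ^ p ∂μ) ^ (1/p)
    ∀ ν₁ ν₂ ν₃ : Measure ℝ,
      IsProbabilityMeasure ν₁ → ν₁ (Ico 0 1) = 1 →
      IsProbabilityMeasure ν₂ → ν₂ (Ico 0 1) = 1 →
      IsProbabilityMeasure ν₃ → ν₃ (Ico 0 1) = 1 →
      0 ≤ d ν₁ ν₂ ∧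
      d ν₁ ν₂ = d ν₂ ν₁ ∧
      (d ν₁ ν₂ = 0 ↔ ν₁ = ν₂) ∧
      d ν₁ ν₂ ≤ d ν₁ ν₃ + d ν₃ ν₂ := by
  intro ν₁ ν₂ ν₃ h₁ hν₁ h₂ hν₂ h₃ hν₃
  let E : Measure ℝ → ℝ → UnitAddCircle := fun ν t => lcotEmbed μ ν (A ν) t
  have hE (ν : Measure ℝ) [IsProbabilityMeasure ν] : AEStronglyMeasurable (E ν) μ :=
    (AddCircle.measurable_mk'.comp (measurable_lcotEmbed ν _)).aestronglyMeasurable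
  have hd (ν ν' : Measure ℝ) [IsProbabilityMeasure ν] [IsProbabilityMeasure ν'] :
      (∫ t, circleDist (lcotEmbed μ ν (A ν) t) (lcotEmbed μ ν' (A ν') t) ^ p ∂μ) ^ (1 / p) =
        (eLpNorm (E ν - E ν') (ENNReal.ofReal p) μ).toReal :=
    integral_circleDist_rpow_eq_eLpNorm (by linarith) (measurable_lcotEmbed ν _)
      (measurable_lcotEmbed ν' _)
  have hfin (ν ν' : Measure ℝ) [IsProbabilityMeasure ν] [IsProbabilityMeasure ν'] :
      eLpNorm (E ν - E ν') (ENNReal.ofReal p) μ ≠ ⊤ :=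
    (UnitAddCircle.memLp ((hE ν).sub (hE ν'))).eLpNorm_ne_top
  beta_reduce
  rw [hd ν₁ ν₂, hd ν₂ ν₁, hd ν₁ ν₃, hd ν₃ ν₂]
  refine ⟨ENNReal.toReal_nonneg, by rw [eLpNorm_sub_comm], ?_, ENNReal.toReal_le_add ?_
    (hfin ν₁ ν₃) (hfin ν₃ ν₂)⟩
  · rw [ENNReal.toReal_eq_zero_iff, or_iff_left (hfin ν₁ ν₂),
      eLpNorm_eq_zero_iff ((hE ν₁).sub (hE ν₂)) (ENNReal.ofReal_pos.2 (by linarith)).ne',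
      sub_ae_eq_zero]
    exact ⟨eq_of_ae_coe_lcotEmbed_eq hμ hac hν₁ hν₂, fun h => h ▸ Filter.EventuallyEq.rfl⟩
  · rw [← sub_add_sub_cancel (E ν₁) (E ν₃) (E ν₂)]
    exact eLpNorm_add_le ((hE ν₁).sub (hE ν₃)) ((hE ν₃).sub (hE ν₂))
      (ENNReal.one_le_ofReal.2 hp)

/-- For `h(x) = |x|^p` with `1 ≤ p < ∞`,
`(ν₁,ν₂) ↦ LCOT_{μ,p}(ν₁,ν₂)^{1/p}` is a metric on circular probability measures:
nonnegative, symmetric, vanishing exactly when `ν₁ = ν₂`, and satisfying the triangle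
inequality. Here `α_{μ,ν} = A ν` denotes the minimizer of the shift cost. -/
theorem lcot_is_metric
    (p : ℝ) (hp : 1 ≤ p)
    (μ : Measure ℝ) [IsProbabilityMeasure μ]
    (hμ : μ (Ico 0 1) = 1) (hac : μ ≪ volume)
    (A : Measure ℝ → ℝ)
    (hA : ∀ ν : Measure ℝ, IsProbabilityMeasure ν → ν (Ico 0 1) = 1 →
      ∀ β : ℝ, shiftCost (fun x => |x| ^ p) μ ν (A ν) ≤
        shiftCost (fun x => |x| ^ p) μ ν β) :
    letI d : Measure ℝ → Measure ℝ → ℝ := fun ν₁ ν₂ =>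
      (∫ t, circleDist (lcotEmbed μ ν₁ (A ν₁) t) (lcotEmbed μ ν₂ (A ν₂) t) ^ p ∂μ) ^ (1/p)
    ∀ ν₁ ν₂ ν₃ : Measure ℝ,
      IsProbabilityMeasure ν₁ → ν₁ (Ico 0 1) = 1 →
      IsProbabilityMeasure ν₂ → ν₂ (Ico 0 1) = 1 →
      IsProbabilityMeasure ν₃ → ν₃ (Ico 0 1) = 1 →
      0 ≤ d ν₁ ν₂ ∧
      d ν₁ ν₂ = d ν₂ ν₁ ∧
      (d ν₁ ν₂ = 0 ↔ ν₁ = ν₂) ∧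
      d ν₁ ν₂ ≤ d ν₁ ν₃ + d ν₃ ν₂ :=
  lcot_is_metric_general p hp μ hμ hac A
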